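/- For each n ∈ ℕ with n ≥ 1, let σ̄(n) denote the infimum of σ(B(λ)) over λ ∈ Λ_n (which is attained). Then σ̄(n) → 2 as n → ∞. -/

import Mathlib

open Real

/-- The `(n+2) × (n+2)` symmetric tridiagonal matrix `B(λ)` with zero diagonal and
entries `λ_{j}^{-1/2}` on the sub/super-diagonals (0-based indexing: the entry in
positions `(i, i+1)` and `(i+1, i)` is `(l i)^{-1/2}` for `i = 0, …, n`). -/
noncomputable def Bmat (n : ℕ) (l : Fin (n+1) → ℝ) :
    Matrix (Fin (n+2)) (Fin (n+2)) ℝ :=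
  Matrix.of fun i j =>
    if h1 : (i : ℕ) + 1 = (j : ℕ) then
      l ⟨(i : ℕ), by have := j.isLt; omega⟩ ^ (-(1/2) : ℝ)
    else if h2 : (j : ℕ) + 1 = (i : ℕ) then
      l ⟨(j : ℕ), by have := i.isLt; omega⟩ ^ (-(1/2) : ℝ)
    else 0

/-- The largest eigenvalue (Perron root) of `B(λ)`. -/
noncomputable def sigmaB (n : ℕ) (l : Fin (n+1) → ℝ) : ℝ :=
  sSup {μ : ℝ | ∃ v : Fin (n+2) → ℝ, v ≠ 0 ∧ (Bmat n l).mulVec v = μ • v}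

/-- The feasible set `Λ_n`: all entries positive and `(1/(n+1)) ∑ λ_i ≤ 1`. -/
def Feasible (n : ℕ) (l : Fin (n+1) → ℝ) : Prop :=
  (∀ i, 0 < l i) ∧ (∑ i, l i) / ((n : ℝ) + 1) ≤ 1

/-- `λ̄` is a minimizer of `σ(B(·))` over `Λ_n`. -/
def IsMinimizer (n : ℕ) (l : Fin (n+1) → ℝ) : Prop :=
  Feasible n l ∧ ∀ m : Fin (n+1) → ℝ, Feasible n m → sigmaB n l ≤ sigmaB n m

/-- A Perron vector of `B(λ)`: positive entries, Euclidean norm one,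
eigenvector for the Perron root. -/
def IsPerronVector (n : ℕ) (l : Fin (n+1) → ℝ) (v : Fin (n+2) → ℝ) : Prop :=
  (∀ i, 0 < v i) ∧ (∑ i, v i ^ 2) = 1 ∧ (Bmat n l).mulVec v = sigmaB n l • v

/-!
Testing the Rayleigh quotient of `B(λ)` on the all-ones vector gives
`(n + 2) σ(B(λ)) ≥ 2 ∑ λ_i^{-1/2}`, and the tangent line `λ^{-1/2} ≥ (3 - λ)/2` of the convex
function `λ^{-1/2}` at `1` turns `∑ λ_i ≤ n + 1` into `∑ λ_i^{-1/2} ≥ n + 1`; hence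
`σ̄(n) ≥ 2(n + 1)/(n + 2)`. Conversely `2xy ≤ x² + y²` bounds the quadratic form of `B(1)` by
`2‖x‖²`, so `σ̄(n) ≤ σ(B(1)) ≤ 2`.

The minimum is attained because `σ(B(λ))` moves by at most twice the `ℓ¹` change of the entries
`λ_i^{-1/2}`, hence is continuous, while a single entry `λ_i < 1/4` already forces
`σ(B(λ)) ≥ λ_i^{-1/2} > 2`: one may minimise over the compact set where every `λ_i ≥ 1/4`.
-/

open Finset Matrix
open scoped MatrixOrder

namespace Matrix.IsHermitian

variable {ι : Type*} [Fintype ι] [DecidableEq ι] {A : Matrix ι ι ℝ}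

theorem forall_spectrum_le_iff (hA : A.IsHermitian) (r : ℝ) :
    (∀ μ ∈ spectrum ℝ A, μ ≤ r) ↔ ∀ x, x ⬝ᵥ A *ᵥ x ≤ r * (x ⬝ᵥ x) := by
  rw [← le_algebraMap_iff_spectrum_le hA.isSelfAdjoint, Matrix.le_iff,
    posSemidef_iff_dotProduct_mulVec, Algebra.algebraMap_eq_smul_one,
    and_iff_right ((isHermitian_one.smul (.all r)).sub hA)]
  simp [sub_mulVec, dotProduct_sub, smul_mulVec]

theorem sSup_spectrum_le_iff [Nonempty ι] (hA : A.IsHermitian) (r : ℝ) :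
    sSup (spectrum ℝ A) ≤ r ↔ ∀ x, x ⬝ᵥ A *ᵥ x ≤ r * (x ⬝ᵥ x) := by
  have hne : (spectrum ℝ A).Nonempty :=
    ⟨_, hA.eigenvalues_mem_spectrum_real (Classical.arbitrary ι)⟩
  rw [csSup_le_iff finite_real_spectrum.bddAbove hne, hA.forall_spectrum_le_iff]

end Matrix.IsHermitian

theorem Matrix.setOf_mulVec_eq_smul_eq_spectrum {K ι : Type*} [Field K] [Fintype ι]
    [DecidableEq ι] (A : Matrix ι ι K) :
    {μ | ∃ v, v ≠ 0 ∧ A *ᵥ v = μ • v} = spectrum K A := by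
  ext μ
  rw [← Matrix.spectrum_toLin', ← Module.End.hasEigenvalue_iff_mem_spectrum,
    Module.End.hasEigenvalue_iff, Submodule.ne_bot_iff]
  simp [and_comm]

theorem Fin.sum_sum_ite_val_add_one_eq {M : Type*} [AddCommMonoid M] {n : ℕ}
    (f : Fin (n + 2) → Fin (n + 2) → M) :
    ∑ i : Fin (n + 2), ∑ j : Fin (n + 2), (if (i : ℕ) + 1 = j then f i j else 0)
      = ∑ t : Fin (n + 1), f t.castSucc t.succ := by
  have hlast (j : Fin (n + 2)) : ¬ ((Fin.last (n + 1) : ℕ) + 1 = j) := by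
    simp only [Fin.val_last]; omega
  have hsucc (t : Fin (n + 1)) (j : Fin (n + 2)) : (t.castSucc : ℕ) + 1 = j ↔ t.succ = j := by
    simp [Fin.ext_iff]
  rw [Fin.sum_univ_castSucc]
  simp only [hlast, hsucc, if_false, sum_const_zero, add_zero, sum_ite_eq, mem_univ, if_true]

theorem Fin.sum_mul_two_mul_castSucc_succ_le {n : ℕ} {M : ℝ} (c : Fin (n + 1) → ℝ)
    (hc : ∀ t, |c t| ≤ M) (x : Fin (n + 2) → ℝ) :
    ∑ t, c t * (2 * x t.castSucc * x t.succ) ≤ 2 * M * (x ⬝ᵥ x) := by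
  have hM : 0 ≤ M := (abs_nonneg _).trans (hc 0)
  have hterm (t : Fin (n + 1)) :
      c t * (2 * x t.castSucc * x t.succ) ≤ M * (x t.castSucc ^ 2 + x t.succ ^ 2) := by
    have h2 : |2 * x t.castSucc * x t.succ| ≤ x t.castSucc ^ 2 + x t.succ ^ 2 :=
      abs_le.mpr ⟨by nlinarith [sq_nonneg (x t.castSucc + x t.succ)],
        two_mul_le_add_sq _ _⟩
    calc c t * (2 * x t.castSucc * x t.succ)
        ≤ |c t| * |2 * x t.castSucc * x t.succ| := (le_abs_self _).trans (abs_mul _ _).le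
      _ ≤ M * (x t.castSucc ^ 2 + x t.succ ^ 2) :=
        mul_le_mul (hc t) h2 (abs_nonneg _) hM
  have hxx : x ⬝ᵥ x = ∑ i, x i ^ 2 := by simp [dotProduct, sq]
  have hcast : ∑ t : Fin (n + 1), x t.castSucc ^ 2 ≤ x ⬝ᵥ x := by
    rw [hxx, Fin.sum_univ_castSucc (f := fun i => x i ^ 2)]
    exact le_add_of_nonneg_right (sq_nonneg _)
  have hsucc : ∑ t : Fin (n + 1), x t.succ ^ 2 ≤ x ⬝ᵥ x := by
    rw [hxx, Fin.sum_univ_succ (f := fun i => x i ^ 2)]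
    exact le_add_of_nonneg_left (sq_nonneg _)
  calc ∑ t, c t * (2 * x t.castSucc * x t.succ)
      ≤ ∑ t, M * (x t.castSucc ^ 2 + x t.succ ^ 2) := sum_le_sum fun t _ => hterm t
    _ = M * (∑ t : Fin (n + 1), x t.castSucc ^ 2 + ∑ t : Fin (n + 1), x t.succ ^ 2) := by
      rw [← sum_add_distrib, mul_sum]
    _ ≤ 2 * M * (x ⬝ᵥ x) := by nlinarith

theorem Real.rpow_neg_half_eq_inv_sqrt {x : ℝ} (hx : 0 ≤ x) : x ^ (-(1/2) : ℝ) = (√x)⁻¹ := by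
  rw [Real.rpow_neg hx, Real.sqrt_eq_rpow]

theorem Real.three_sub_le_two_mul_rpow_neg_half {x : ℝ} (hx : 0 < x) :
    3 - x ≤ 2 * x ^ (-(1/2) : ℝ) := by
  have hs : 0 < √x := Real.sqrt_pos.mpr hx
  have hxs : x = √x ^ 2 := (Real.sq_sqrt hx.le).symm
  rw [Real.rpow_neg_half_eq_inv_sqrt hx.le, ← div_eq_mul_inv, le_div_iff₀ hs]
  nlinarith [mul_nonneg (sq_nonneg (√x - 1)) hs.le]

theorem Real.two_lt_rpow_neg_half {x : ℝ} (hx : 0 < x) (h : x < 1/4) :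
    2 < x ^ (-(1/2) : ℝ) := by
  have hs : √x < 2⁻¹ := (Real.sqrt_lt' (by norm_num)).mpr (by linarith)
  rw [Real.rpow_neg_half_eq_inv_sqrt hx.le]
  exact (lt_inv_comm₀ two_pos (Real.sqrt_pos.mpr hx)).mpr hs

theorem card_le_sum_rpow_neg_half {ι : Type*} [Fintype ι] (l : ι → ℝ) (hl : ∀ i, 0 < l i)
    (hsum : ∑ i, l i ≤ Fintype.card ι) :
    (Fintype.card ι : ℝ) ≤ ∑ i, l i ^ (-(1/2) : ℝ) := by
  have h := sum_le_sum fun i (_ : i ∈ univ) => Real.three_sub_le_two_mul_rpow_neg_half (hl i)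
  rw [sum_sub_distrib, ← mul_sum] at h
  simp only [sum_const, card_univ, nsmul_eq_mul] at h
  linarith

section Bmat

variable {n : ℕ}

theorem Bmat_isHermitian (l : Fin (n + 1) → ℝ) : (Bmat n l).IsHermitian := by
  ext i j
  simp only [conjTranspose_apply, star_trivial, Bmat, of_apply]
  split_ifs <;> first | rfl | omega

theorem Bmat_apply_castSucc_succ (l : Fin (n + 1) → ℝ) (t : Fin (n + 1)) :
    Bmat n l t.castSucc t.succ = l t ^ (-(1/2) : ℝ) := by
  simp [Bmat]

theorem Bmat_apply_succ_castSucc (l : Fin (n + 1) → ℝ) (t : Fin (n + 1)) :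
    Bmat n l t.succ t.castSucc = l t ^ (-(1/2) : ℝ) := by
  simp [Bmat]
  omega

theorem Bmat_apply_self (l : Fin (n + 1) → ℝ) (i : Fin (n + 2)) : Bmat n l i i = 0 := by
  simp [Bmat]

theorem dotProduct_mulVec_Bmat (l : Fin (n + 1) → ℝ) (x : Fin (n + 2) → ℝ) :
    x ⬝ᵥ Bmat n l *ᵥ x = ∑ t, l t ^ (-(1/2) : ℝ) * (2 * x t.castSucc * x t.succ) := by
  have hsplit (i j : Fin (n + 2)) : x i * (Bmat n l i j * x j)
      = (if (i : ℕ) + 1 = j then x i * Bmat n l i j * x j else 0)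
        + (if (j : ℕ) + 1 = i then x j * Bmat n l j i * x i else 0) := by
    have hsymm : Bmat n l j i = Bmat n l i j := by
      simpa using ((Bmat_isHermitian l).apply j i).symm
    by_cases h1 : (i : ℕ) + 1 = j <;> by_cases h2 : (j : ℕ) + 1 = i
    · omega
    all_goals simp only [h1, h2, if_true, if_false, hsymm]
    · ring
    · ring
    · simp [Bmat, h1, h2]
  simp only [dotProduct, mulVec, mul_sum, hsplit, sum_add_distrib]
  rw [Fin.sum_sum_ite_val_add_one_eq, sum_comm, Fin.sum_sum_ite_val_add_one_eq,
    ← sum_add_distrib]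
  refine sum_congr rfl fun t _ => ?_
  rw [Bmat_apply_castSucc_succ]
  ring

theorem sigmaB_eq_sSup_spectrum (l : Fin (n + 1) → ℝ) :
    sigmaB n l = sSup (spectrum ℝ (Bmat n l)) := by
  rw [sigmaB, Matrix.setOf_mulVec_eq_smul_eq_spectrum]

theorem sigmaB_le_iff (l : Fin (n + 1) → ℝ) (r : ℝ) :
    sigmaB n l ≤ r ↔ ∀ x, x ⬝ᵥ Bmat n l *ᵥ x ≤ r * (x ⬝ᵥ x) := by
  rw [sigmaB_eq_sSup_spectrum, (Bmat_isHermitian l).sSup_spectrum_le_iff]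

theorem dotProduct_mulVec_Bmat_le (l : Fin (n + 1) → ℝ) (x : Fin (n + 2) → ℝ) :
    x ⬝ᵥ Bmat n l *ᵥ x ≤ sigmaB n l * (x ⬝ᵥ x) :=
  (sigmaB_le_iff l _).mp le_rfl x

theorem sigmaB_le_sigmaB_add (l l' : Fin (n + 1) → ℝ) :
    sigmaB n l ≤ sigmaB n l' + 2 * ∑ t, |l t ^ (-(1/2) : ℝ) - l' t ^ (-(1/2) : ℝ)| := by
  rw [sigmaB_le_iff]
  intro x
  have hdiff := Fin.sum_mul_two_mul_castSucc_succ_le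
    (fun t => l t ^ (-(1/2) : ℝ) - l' t ^ (-(1/2) : ℝ))
    (fun t => single_le_sum (f := fun s => |l s ^ (-(1/2) : ℝ) - l' s ^ (-(1/2) : ℝ)|)
      (fun _ _ => abs_nonneg _) (mem_univ t)) x
  have hl' := dotProduct_mulVec_Bmat_le l' x
  rw [dotProduct_mulVec_Bmat] at hl' ⊢
  simp only [sub_mul, sum_sub_distrib] at hdiff
  linarith

theorem abs_sigmaB_sub_le (l l' : Fin (n + 1) → ℝ) :
    |sigmaB n l - sigmaB n l'| ≤ 2 * ∑ t, |l t ^ (-(1/2) : ℝ) - l' t ^ (-(1/2) : ℝ)| := by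
  have hsymm : ∑ t, |l' t ^ (-(1/2) : ℝ) - l t ^ (-(1/2) : ℝ)|
      = ∑ t, |l t ^ (-(1/2) : ℝ) - l' t ^ (-(1/2) : ℝ)| :=
    sum_congr rfl fun t _ => abs_sub_comm _ _
  rw [abs_sub_le_iff]
  constructor <;> linarith [sigmaB_le_sigmaB_add l l', sigmaB_le_sigmaB_add l' l]

theorem continuousOn_sigmaB : ContinuousOn (sigmaB n) {l | ∀ i, 0 < l i} := by
  intro l₀ hl₀
  have hterm (t : Fin (n + 1)) : ContinuousAt (fun l : Fin (n + 1) → ℝ =>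
      |l t ^ (-(1/2) : ℝ) - l₀ t ^ (-(1/2) : ℝ)|) l₀ :=
    ((((continuous_apply t).continuousAt (x := l₀)).rpow_const (.inl (hl₀ t).ne')).sub
      continuousAt_const).abs
  have hw := ((tendsto_finsetSum univ fun t _ => hterm t).const_mul 2).mono_left
    (nhdsWithin_le_nhds (s := {l | ∀ i, 0 < l i}))
  rw [ContinuousWithinAt, tendsto_iff_norm_sub_tendsto_zero]
  refine squeeze_zero (fun _ => norm_nonneg _) (fun l => abs_sigmaB_sub_le l l₀) ?_
  simpa using hw

theorem two_mul_sum_le_sigmaB_mul (l : Fin (n + 1) → ℝ) :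
    2 * ∑ t, l t ^ (-(1/2) : ℝ) ≤ sigmaB n l * (n + 2) := by
  have h := dotProduct_mulVec_Bmat_le l 1
  rw [dotProduct_mulVec_Bmat] at h
  simpa [dotProduct, mul_sum, mul_comm] using h

theorem rpow_neg_half_le_sigmaB (l : Fin (n + 1) → ℝ) (t : Fin (n + 1)) :
    l t ^ (-(1/2) : ℝ) ≤ sigmaB n l := by
  have hne : t.castSucc ≠ t.succ := Fin.castSucc_lt_succ.ne
  have h := dotProduct_mulVec_Bmat_le l (Pi.single t.castSucc 1 + Pi.single t.succ 1)
  simp [mulVec_add, add_dotProduct, dotProduct_add, hne, hne.symm,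
    Bmat_apply_self, Bmat_apply_castSucc_succ, Bmat_apply_succ_castSucc] at h
  linarith

theorem sigmaB_one_le_two : sigmaB n 1 ≤ 2 := by
  rw [sigmaB_le_iff]
  intro x
  simpa [dotProduct_mulVec_Bmat] using
    Fin.sum_mul_two_mul_castSucc_succ_le 1 (M := 1) (by simp) x

end Bmat

section Feasible

variable {n : ℕ}

theorem feasible_iff {l : Fin (n + 1) → ℝ} :
    Feasible n l ↔ (∀ i, 0 < l i) ∧ ∑ i, l i ≤ n + 1 := by
  rw [Feasible, div_le_one (by positivity)]

theorem feasible_one : Feasible n 1 := feasible_iff.mpr ⟨fun _ => one_pos, by simp⟩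

theorem Feasible.two_mul_div_le_sigmaB {l : Fin (n + 1) → ℝ} (hl : Feasible n l) :
    2 * (n + 1) / (n + 2) ≤ sigmaB n l := by
  rw [feasible_iff] at hl
  have hcard := card_le_sum_rpow_neg_half l hl.1 (by simpa using hl.2)
  rw [div_le_iff₀ (by positivity)]
  simp only [Fintype.card_fin, Nat.cast_add, Nat.cast_one] at hcard
  linarith [two_mul_sum_le_sigmaB_mul l]

theorem exists_isMinimizer (n : ℕ) : ∃ l, IsMinimizer n l := by
  set K := Set.Icc (fun _ => 1/4) (fun _ => (n : ℝ) + 1) ∩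
    {l : Fin (n + 1) → ℝ | ∑ i, l i ≤ n + 1}
  have hK : IsCompact K := isCompact_Icc.inter_right
    (isClosed_le (continuous_finsetSum _ fun i _ => continuous_apply i) continuous_const)
  have hKpos : K ⊆ {l | ∀ i, 0 < l i} := fun l hl i => lt_of_lt_of_le (by norm_num) (hl.1.1 i)
  have hmem {l} (hl : Feasible n l) (hl4 : ∀ i, 1/4 ≤ l i) : l ∈ K := by
    rw [feasible_iff] at hl
    refine ⟨⟨hl4, fun i => ?_⟩, hl.2⟩
    exact (single_le_sum (fun j _ => (hl.1 j).le) (mem_univ i)).trans hl.2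
  have hone : (1 : Fin (n + 1) → ℝ) ∈ K := hmem feasible_one fun _ => by norm_num
  obtain ⟨l₀, hl₀, hmin⟩ := hK.exists_isMinOn ⟨1, hone⟩ (continuousOn_sigmaB.mono hKpos)
  refine ⟨l₀, feasible_iff.mpr ⟨hKpos hl₀, hl₀.2⟩, fun l hl => ?_⟩
  by_cases hl4 : ∀ i, 1/4 ≤ l i
  · exact hmin (hmem hl hl4)
  · obtain ⟨i, hi⟩ := not_forall.mp hl4
    calc sigmaB n l₀ ≤ sigmaB n 1 := hmin hone
      _ ≤ 2 := sigmaB_one_le_two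
      _ ≤ l i ^ (-(1/2) : ℝ) :=
        (Real.two_lt_rpow_neg_half ((feasible_iff.mp hl).1 i) (not_le.mp hi)).le
      _ ≤ sigmaB n l := rpow_neg_half_le_sigmaB l i

theorem IsMinimizer.isLeast {l : Fin (n + 1) → ℝ} (hl : IsMinimizer n l) :
    IsLeast {s | ∃ l' : Fin (n + 1) → ℝ, Feasible n l' ∧ sigmaB n l' = s} (sigmaB n l) :=
  ⟨⟨l, hl.1, rfl⟩, fun _ ⟨l', hl', hs⟩ => hs ▸ hl.2 l' hl'⟩

end Feasible

theorem tendsto_two_mul_div_atTop :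
    Filter.Tendsto (fun n : ℕ => 2 * ((n : ℝ) + 1) / (n + 2)) Filter.atTop (nhds 2) := by
  have h := ((tendsto_natCast_div_add_atTop (1 : ℝ)).comp
    (Filter.tendsto_add_atTop_nat 1)).const_mul 2
  rw [mul_one] at h
  refine h.congr fun n => ?_
  simp only [Function.comp, Nat.cast_add, Nat.cast_one]
  ring

/-- the optimal value `σ̄(n)` (the infimum of `σ(B(λ))` over `Λ_n`,
which is attained) converges to `2` as `n → ∞`. -/
theorem stmt_17 :
    Filter.Tendsto
      (fun n : ℕ =>
        sInf {s : ℝ | ∃ l : Fin (n+1) → ℝ, Feasible n l ∧ sigmaB n l = s})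
      Filter.atTop (nhds 2) ∧
    ∀ n : ℕ, 1 ≤ n → ∃ l : Fin (n+1) → ℝ, Feasible n l ∧
      sigmaB n l
        = sInf {s : ℝ | ∃ l' : Fin (n+1) → ℝ, Feasible n l' ∧ sigmaB n l' = s} := by
  choose l hl using exists_isMinimizer
  have hinf (n : ℕ) : sInf {s : ℝ | ∃ l : Fin (n+1) → ℝ, Feasible n l ∧ sigmaB n l = s}
      = sigmaB n (l n) := (hl n).isLeast.csInf_eq
  refine ⟨?_, fun n _ => ⟨l n, (hl n).1, (hinf n).symm⟩⟩
  simp only [hinf]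
  exact tendsto_of_tendsto_of_tendsto_of_le_of_le tendsto_two_mul_div_atTop tendsto_const_nhds
    (fun n => (hl n).1.two_mul_div_le_sigmaB)
    (fun n => ((hl n).2 1 feasible_one).trans sigmaB_one_le_two)
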